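/- arXiv:1310.5909 — 5 statements merged into one kernel-verified Lean document; each statement's English description precedes it below -/
import Mathlib

section
/- Let p be a prime and G a finite group. Let C be a normal subset of G consisting of p-elements such that for all x, y ∈ C the subgroup ⟨x,y⟩ generated by x and y is a p-group. Then the subgroup ⟨C⟩ generated by C is a p-group. -/
/-!
Call a `p`-subgroup generated by elements of `C` a `C`-subgroup. If there is only one maximal
`C`-subgroup, it contains every `c ∈ C`, hence `⟨C⟩`. Otherwise take a `C`-subgroup `E` of
maximal size among those lying in two distinct maximal `C`-subgroups `P ≠ Q`. As `P` and `Q` are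
nilpotent, each contains an element of `C` outside `E` normalizing `E`, say `c ∈ P` and `d ∈ Q`.
Some `C`-subgroup contains `E`, `c` and `d`: `⟨c, d⟩E` if `E` is normal, and otherwise
`⟨C ∩ N_G(E)⟩`, a `p`-group by induction on `|G|`. A maximal `C`-subgroup `R` above it differs
from `P` or from `Q`, and then `⟨c⟩E ≤ P ⊓ R` or `⟨d⟩E ≤ Q ⊓ R` contradicts the choice of `E`.
-/

open Subgroup

namespace BaerSuzuki

variable {G : Type*} [Group G] {C : Set G}

lemma normalizer_eq_top_of_conj_mem (hC : ∀ c ∈ C, ∀ g : G, g⁻¹ * c * g ∈ C) :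
    normalizer C = ⊤ :=
  eq_top_iff.mpr fun g _ => mem_set_normalizer_iff''.mpr fun c =>
    ⟨fun hc => hC c hc g, fun hc => by simpa [mul_assoc] using hC _ hc g⁻¹⟩

lemma normalizer_le_normalizer_closure_inter (hC : normalizer C = ⊤) (K : Subgroup G) :
    normalizer (K : Set G) ≤ normalizer (closure (C ∩ K) : Set G) := fun g hg =>
  normalizer_le_normalizer_closure _ <| mem_set_normalizer_iff.mpr fun x =>
    and_congr (mem_set_normalizer_iff.mp (hC ▸ mem_top g) x) (mem_set_normalizer_iff.mp hg x)

lemma closure_inter_closure_of_subset {S : Set G} (hS : S ⊆ C) :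
    closure (C ∩ closure S) = closure S :=
  le_antisymm ((closure_le _).mpr Set.inter_subset_right)
    (closure_mono fun _ hx => ⟨hS hx, subset_closure hx⟩)

lemma closure_inter_eq_of_le {E K : Subgroup G} (hE : closure (C ∩ E) = E) (hEK : E ≤ K)
    (hK : C ∩ K ⊆ E) : closure (C ∩ K) = E :=
  le_antisymm ((closure_le _).mpr hK)
    (hE.ge.trans (closure_mono (Set.inter_subset_inter_right _ hEK)))

lemma lt_normalizer_inf_of_lt {K P : Subgroup G} (hP : NormalizerCondition P) (hKP : K < P) :
    K < normalizer (K : Set G) ⊓ P := by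
  have hlt := hP (K.subgroupOf P) (by
    rw [lt_top_iff_ne_top, Ne, subgroupOf_eq_top]; exact hKP.not_ge)
  rw [← subgroupOf_normalizer_eq hKP.le] at hlt
  obtain ⟨⟨x, hxP⟩, hxN, hxK⟩ := SetLike.exists_of_lt hlt
  exact SetLike.lt_iff_le_and_exists.mpr
    ⟨le_inf le_normalizer hKP.le, x, mem_inf.mpr ⟨mem_subgroupOf.mp hxN, hxP⟩,
      fun h => hxK (mem_subgroupOf.mpr h)⟩

lemma exists_mem_normalizer_of_not_subset [Finite G] (hC : normalizer C = ⊤)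
    {E P : Subgroup G} (hP : NormalizerCondition P) (hE : closure (C ∩ E) = E) (hEP : E ≤ P)
    (hCP : ¬ C ∩ P ⊆ E) : ∃ c ∈ C, c ∈ P ∧ c ∉ E ∧ c ∈ normalizer (E : Set G) := by
  -- For `K` maximal with `C ∩ K ⊆ E`, the normalizer of `K` in `P` is larger and so meets
  -- `C \ E`; such an element normalizes `C ∩ K`, which generates `E`.
  obtain ⟨K, hEK, hK⟩ := Finite.exists_le_maximal
    (p := fun K : Subgroup G => K ≤ P ∧ C ∩ K ⊆ E) (a := E) ⟨hEP, Set.inter_subset_right⟩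
  have hKP : K < P := lt_of_le_of_ne hK.prop.1 (by rintro rfl; exact hCP hK.prop.2)
  have hKN := lt_normalizer_inf_of_lt hP hKP
  have hN : ¬ C ∩ ↑(normalizer (K : Set G) ⊓ P) ⊆ E := fun h =>
    hKN.not_ge (hK.2 ⟨inf_le_right, h⟩ hKN.le)
  obtain ⟨c, ⟨hcC, hcN, hcP⟩, hcE⟩ := Set.not_subset.mp hN
  refine ⟨c, hcC, hcP, hcE, ?_⟩
  rw [← closure_inter_eq_of_le hE hEK hK.prop.2]
  exact normalizer_le_normalizer_closure_inter hC K hcN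

variable (p : ℕ) in
def IsPSubgroupGenBy (C : Set G) (X : Subgroup G) : Prop :=
  IsPGroup p X ∧ closure (C ∩ X) = X

variable {p : ℕ}

lemma isPSubgroupGenBy_bot : IsPSubgroupGenBy p C ⊥ :=
  ⟨IsPGroup.of_bot, le_antisymm ((closure_le _).mpr Set.inter_subset_right) bot_le⟩

lemma isPSubgroupGenBy_closure {S : Set G} (hS : S ⊆ C) (hp : IsPGroup p (closure S)) :
    IsPSubgroupGenBy p C (closure S) :=
  ⟨hp, closure_inter_closure_of_subset hS⟩

lemma IsPSubgroupGenBy.sup {X Y : Subgroup G} (hY : IsPSubgroupGenBy p C Y)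
    (hX : IsPSubgroupGenBy p C X) (hYX : Y ≤ normalizer (X : Set G)) :
    IsPSubgroupGenBy p C (Y ⊔ X) := by
  have hgen : Y ⊔ X = closure ((C ∩ Y) ∪ (C ∩ X)) := by
    rw [Subgroup.closure_union, hY.2, hX.2]
  refine ⟨hY.1.to_sup_of_normal_right' hX.1 hYX, ?_⟩
  rw [hgen]
  exact closure_inter_closure_of_subset
    (Set.union_subset Set.inter_subset_left Set.inter_subset_left)

lemma IsPSubgroupGenBy.exists_mem_normalizer [Finite G] [Fact p.Prime] (hC : normalizer C = ⊤)
    {E P : Subgroup G} (hP : IsPSubgroupGenBy p C P) (hE : closure (C ∩ E) = E) (hEP : E < P) :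
    ∃ c ∈ C, c ∈ P ∧ c ∉ E ∧ c ∈ normalizer (E : Set G) :=
  have := hP.1.isNilpotent
  exists_mem_normalizer_of_not_subset hC Group.normalizerCondition_of_isNilpotent hE hEP.le
    fun h => hEP.not_ge (hP.2 ▸ (closure_le _).mpr h)

lemma isPGroup_closure_of_maximal_unique [Finite G]
    (hC : ∀ c ∈ C, IsPGroup p (closure {c}))
    (huniq : ∀ P Q, Maximal (IsPSubgroupGenBy p C) P → Maximal (IsPSubgroupGenBy p C) Q →
      P = Q) :
    IsPGroup p (closure C) := by
  obtain ⟨M, -, hM⟩ := Finite.exists_le_maximal (isPSubgroupGenBy_bot (p := p) (C := C))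
  refine hM.prop.1.to_le ((closure_le _).mpr fun c hc => ?_)
  obtain ⟨P, hcP, hP⟩ := Finite.exists_le_maximal
    (isPSubgroupGenBy_closure (Set.singleton_subset_iff.mpr hc) (hC c hc))
  exact huniq P M hP hM ▸ hcP (subset_closure rfl)

variable (p) in
def IsBelowTwoMaximal (C : Set G) (X : Subgroup G) : Prop :=
  IsPSubgroupGenBy p C X ∧ ∃ P Q, Maximal (IsPSubgroupGenBy p C) P ∧
    Maximal (IsPSubgroupGenBy p C) Q ∧ P ≠ Q ∧ X ≤ P ∧ X ≤ Q

lemma mem_of_maximal_isBelowTwoMaximal {E P R : Subgroup G}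
    (hE : Maximal (IsBelowTwoMaximal p C) E) (hP : Maximal (IsPSubgroupGenBy p C) P)
    (hR : Maximal (IsPSubgroupGenBy p C) R) (hPR : P ≠ R) (hEP : E ≤ P) (hER : E ≤ R)
    {c : G} (hc : c ∈ C) (hcp : IsPGroup p (closure {c})) (hcP : c ∈ P) (hcR : c ∈ R)
    (hcN : c ∈ normalizer (E : Set G)) : c ∈ E := by
  have hgood : IsPSubgroupGenBy p C (closure {c} ⊔ E) :=
    (isPSubgroupGenBy_closure (Set.singleton_subset_iff.mpr hc) hcp).sup hE.prop.1
      ((closure_le _).mpr (Set.singleton_subset_iff.mpr hcN))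
  have hle {X : Subgroup G} (hcX : c ∈ X) (hEX : E ≤ X) : closure {c} ⊔ E ≤ X :=
    sup_le ((closure_le _).mpr (Set.singleton_subset_iff.mpr hcX)) hEX
  exact hE.2 ⟨hgood, P, R, hP, hR, hPR, hle hcP hEP, hle hcR hER⟩ le_sup_right
    (mem_sup_left (subset_closure rfl))

theorem isPGroup_closure_of_isPGroup_closure_inter [Finite G] [Fact p.Prime]
    (hC : normalizer C = ⊤) (hpair : ∀ x ∈ C, ∀ y ∈ C, IsPGroup p (closure {x, y}))
    (hproper : ∀ H : Subgroup G, H ≠ ⊤ → IsPGroup p (closure (C ∩ H))) :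
    IsPGroup p (closure C) := by
  have hsingle (c : G) (hc : c ∈ C) : IsPGroup p (closure {c}) :=
    Set.pair_eq_singleton c ▸ hpair c hc c hc
  by_contra hCp
  obtain ⟨P₀, Q₀, hP₀, hQ₀, hPQ₀⟩ : ∃ P Q, Maximal (IsPSubgroupGenBy p C) P ∧
      Maximal (IsPSubgroupGenBy p C) Q ∧ P ≠ Q := by
    by_contra! huniq
    exact hCp (isPGroup_closure_of_maximal_unique hsingle huniq)
  obtain ⟨E, -, hE⟩ := Finite.exists_le_maximal (p := IsBelowTwoMaximal p C)
    ⟨isPSubgroupGenBy_bot, P₀, Q₀, hP₀, hQ₀, hPQ₀, bot_le, bot_le⟩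
  obtain ⟨hEgood, P, Q, hP, hQ, hPQ, hEP, hEQ⟩ := hE.prop
  have hEP' : E < P := hEP.lt_of_ne fun h => hPQ (le_antisymm (h ▸ hEQ) (hP.2 hQ.1 (h ▸ hEQ)))
  have hEQ' : E < Q := hEQ.lt_of_ne fun h => hPQ (le_antisymm (hQ.2 hP.1 (h ▸ hEP)) (h ▸ hEP))
  obtain ⟨c, hc, hcP, hcE, hcN⟩ := hP.prop.exists_mem_normalizer hC hEgood.2 hEP'
  obtain ⟨d, hd, hdQ, hdE, hdN⟩ := hQ.prop.exists_mem_normalizer hC hEgood.2 hEQ'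
  obtain ⟨F, hF, hEF, hcF, hdF⟩ : ∃ F, IsPSubgroupGenBy p C F ∧ E ≤ F ∧ c ∈ F ∧ d ∈ F := by
    by_cases hN : normalizer (E : Set G) = ⊤
    · have hcd := isPSubgroupGenBy_closure
        (Set.insert_subset hc (Set.singleton_subset_iff.mpr hd)) (hpair c hc d hd)
      exact ⟨closure {c, d} ⊔ E, hcd.sup hEgood (hN ▸ le_top), le_sup_right,
        mem_sup_left (subset_closure (by simp)), mem_sup_left (subset_closure (by simp))⟩
    · refine ⟨closure (C ∩ normalizer (E : Set G)),
        isPSubgroupGenBy_closure Set.inter_subset_left (hproper _ hN), ?_,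
        subset_closure ⟨hc, hcN⟩, subset_closure ⟨hd, hdN⟩⟩
      exact hEgood.2.ge.trans (closure_mono (Set.inter_subset_inter_right _ le_normalizer))
  obtain ⟨R, hFR, hR⟩ := Finite.exists_le_maximal hF
  by_cases hPR : P = R
  · exact hdE (mem_of_maximal_isBelowTwoMaximal hE hQ hR (hPR ▸ hPQ.symm) hEQ (hEF.trans hFR)
      hd (hsingle d hd) hdQ (hFR hdF) hdN)
  · exact hcE (mem_of_maximal_isBelowTwoMaximal hE hP hR hPR hEP (hEF.trans hFR)
      hc (hsingle c hc) hcP (hFR hcF) hcN)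

lemma map_subtype_closure_preimage (H : Subgroup G) (S : Set G) :
    (closure (H.subtype ⁻¹' S)).map H.subtype = closure (S ∩ H) := by
  rw [MonoidHom.map_closure, Set.image_preimage_eq_inter_range, coe_subtype,
    Subtype.range_coe_subtype]
  rfl

lemma isPGroup_of_isPGroup_map_subtype {H : Subgroup G} {K : Subgroup H}
    (hK : IsPGroup p (K.map H.subtype)) : IsPGroup p K :=
  hK.of_equiv (K.equivMapOfInjective _ H.subtype_injective).symm

lemma card_lt_of_ne_top [Finite G] {H : Subgroup G} (hH : H ≠ ⊤) : Nat.card H < Nat.card G :=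
  card_le_card_group H |>.lt_of_ne fun h => hH (card_eq_iff_eq_top H |>.mp h)

end BaerSuzuki

open BaerSuzuki

theorem statement_5_general {G : Type*} [Group G] [Fintype G] (p : ℕ) [Fact p.Prime]
    (C : Set G)
    (hnorm : ∀ c ∈ C, ∀ g : G, g⁻¹ * c * g ∈ C)
    (h : ∀ x ∈ C, ∀ y ∈ C, IsPGroup p ↥(Subgroup.closure {x, y})) :
    IsPGroup p ↥(Subgroup.closure C) := by
  induction hn : Nat.card G using Nat.strong_induction_on generalizing G with
  | _ n ih =>
  classical
  refine isPGroup_closure_of_isPGroup_closure_inter (normalizer_eq_top_of_conj_mem hnorm) h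
    fun H hH => ?_
  have hH' : IsPGroup p (closure (H.subtype ⁻¹' C)) := by
    refine ih _ (hn ▸ card_lt_of_ne_top hH) (H.subtype ⁻¹' C) (fun c hc g => hnorm _ hc _)
      (fun x hx y hy => ?_) rfl
    refine isPGroup_of_isPGroup_map_subtype ?_
    rw [MonoidHom.map_closure, Set.image_pair]
    exact h x hx y hy
  exact map_subtype_closure_preimage H C ▸ hH'.map H.subtype

/-- **The Baer–Suzuki theorem, normal subset form.**
If `C` is a normal subset of a finite group `G` consisting of `p`-elements such that
`⟨x, y⟩` is a `p`-group for all `x, y ∈ C`, then `⟨C⟩` is a `p`-group. -/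
theorem statement_5 {G : Type*} [Group G] [Fintype G] (p : ℕ) [Fact p.Prime]
    (C : Set G)
    (hnorm : ∀ c ∈ C, ∀ g : G, g⁻¹ * c * g ∈ C)
    (hpelt : ∀ x ∈ C, ∃ n : ℕ, orderOf x = p ^ n)
    (h : ∀ x ∈ C, ∀ y ∈ C, IsPGroup p ↥(Subgroup.closure {x, y})) :
    IsPGroup p ↥(Subgroup.closure C) :=
  statement_5_general p C hnorm h
end

section
/- Let p be a prime and k a field of characteristic different from p. Let P be a finite p-group and V a finite-dimensional k-vector space carrying an irreducible (simple) representation ρ of P such that the commutator subgroup ⁅P,P⁆ does not act trivially on V. Let x₁, …, x_s be elements generating P, each of order exactly p. Then there exists an index i such that p · dim_k C_V(x_i) = dim_k V, where C_V(x) = {v ∈ V : ρ(x)v = v} is the fixed-point subspace of x. -/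
/-!
Replace `P` by its image `G` in `GL(V)`, a nonabelian `p`-group and hence nilpotent. A
nontrivial central element of `G / Z(G)` lifts to some `b ∉ Z(G)` whose commutators with all
of `G` are central; as `b` is not central, it fails to commute with some generator `a`, and
`z = ⁅b, a⁆` is a nontrivial central element with `z ^ p = 1`. For `p ∤ j` the kernel of
`z ^ j - 1` is a subrepresentation, hence `0`.

With `A = ρ a`, `B = ρ b`, `Z = ρ z` we have `B A = Z A B`. The averaging operators
`p⁻¹ ∑ⱼ (Z ^ c * A) ^ j`, `c < p`, are orthogonal projections summing to `1` onto the fixed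
spaces of the `Z ^ c * A`, so these fixed spaces decompose `V`. Finally `B` embeds the fixed
space of `Z ^ c * A` into that of `Z ^ (c + 1) * A`, and `Z ^ p = 1`, so all `p` of them have
the dimension of the fixed space of `A`.
-/

open Finset Module
open scoped commutatorElement

section GroupTheory

variable {G : Type*} [Group G]

theorem commutatorElement_pow_eq_one {a b : G} {n : ℕ} (hc : Commute ⁅b, a⁆ a) (ha : a ^ n = 1) :
    ⁅b, a⁆ ^ n = 1 := by
  have h : (⁅b, a⁆ * a) ^ n = 1 := by
    rw [commutatorElement_def, inv_mul_cancel_right, conj_pow, ha, mul_one, mul_inv_cancel]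
  rwa [hc.mul_pow, ha, mul_one] at h

theorem Group.IsNilpotent.exists_mem_commutatorElement_mem_center_ne_one [Group.IsNilpotent G]
    {S : Set G} (hS : Subgroup.closure S = ⊤) (hG : Subgroup.center G ≠ ⊤) :
    ∃ a ∈ S, ∃ b : G, ⁅b, a⁆ ∈ Subgroup.center G ∧ ⁅b, a⁆ ≠ 1 := by
  obtain ⟨g, -, hg⟩ := SetLike.exists_of_lt hG.lt_top
  have : Nontrivial (G ⧸ Subgroup.center G) :=
    ⟨⟨g, 1, fun h => hg ((QuotientGroup.eq_one_iff g).mp h)⟩⟩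
  obtain ⟨⟨c, hc⟩, hc1⟩ := Subgroup.ne_bot_iff_exists_ne_one.mp
    (Group.IsNilpotent.center_ne_bot (G ⧸ Subgroup.center G))
  obtain ⟨b, rfl⟩ := QuotientGroup.mk_surjective c
  have hb : b ∈ Subgroup.upperCentralSeries G 2 := by
    rwa [← Subgroup.comap_upperCentralSeries_quotient_center, Subgroup.upperCentralSeries_one]
  have hbZ : b ∉ Subgroup.center G := fun h =>
    hc1 (Subtype.ext ((QuotientGroup.eq_one_iff b).mpr h))
  rw [Subgroup.center_eq_iInf hS] at hbZ
  simp only [Subgroup.mem_iInf, not_forall] at hbZ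
  obtain ⟨a, ha, hab⟩ := hbZ
  refine ⟨a, ha, b, ?_, ?_⟩
  · rw [← Subgroup.upperCentralSeries_one]
    exact Subgroup.mem_upperCentralSeries_succ_iff.mp hb a
  · rwa [Ne, commutatorElement_eq_one_iff_mul_comm, ← Subgroup.mem_centralizer_singleton_iff]

theorem MonoidHom.exists_commutatorElement_ne_one_forall_commute {P : Type*} [Group P]
    [Group.IsNilpotent P] (f : P →* G) {S : Set P} (hS : Subgroup.closure S = ⊤)
    (hf : ¬ commutator P ≤ f.ker) :
    ∃ a ∈ S, ∃ b : P, ⁅f b, f a⁆ ≠ 1 ∧ ∀ g : P, Commute ⁅f b, f a⁆ (f g) := by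
  have := Group.nilpotent_of_surjective _ f.rangeRestrict_surjective
  have hS' : Subgroup.closure (f.rangeRestrict '' S) = ⊤ := by
    rw [← MonoidHom.map_closure, hS, ← MonoidHom.range_eq_map,
      MonoidHom.range_eq_top.mpr f.rangeRestrict_surjective]
  have hcenter : Subgroup.center f.range ≠ ⊤ := by
    refine fun h => hf ?_
    rw [commutator_def, Subgroup.commutator_le]
    intro g₁ _ g₂ _
    have := (Subgroup.mem_center_iff.mp (h ▸ Subgroup.mem_top (f.rangeRestrict g₁))
      (f.rangeRestrict g₂))
    rw [MonoidHom.mem_ker, map_commutatorElement, commutatorElement_eq_one_iff_mul_comm]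
    simpa using congrArg Subtype.val this.symm
  obtain ⟨_, ⟨a, ha, rfl⟩, b', hb'Z, hb'1⟩ :=
    Group.IsNilpotent.exists_mem_commutatorElement_mem_center_ne_one hS' hcenter
  obtain ⟨b, rfl⟩ := f.rangeRestrict_surjective b'
  refine ⟨a, ha, b, fun h => hb'1 (Subtype.ext ?_), fun g => ?_⟩
  · simpa [← map_commutatorElement] using h
  · have := congrArg Subtype.val (Subgroup.mem_center_iff.mp hb'Z (f.rangeRestrict g))
    simpa [← map_commutatorElement, Commute, SemiconjBy] using this.symm

end GroupTheory

theorem Monotone.apply_eq_apply_zero_of_periodic {β : Type*} [PartialOrder β] {f : ℕ → β}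
    (hf : Monotone f) {p : ℕ} (hp : 0 < p) (hper : Function.Periodic f p) (c : ℕ) :
    f c = f 0 := by
  refine le_antisymm ?_ (hf c.zero_le)
  have h := hper.nat_mul_eq c
  rw [Nat.cast_id] at h
  exact h ▸ hf (Nat.le_mul_of_pos_right c hp)

theorem Nat.dvd_add_sub_iff_eq {p c d : ℕ} (hc : c < p) (hd : d < p) :
    p ∣ c + (p - d) ↔ c = d := by
  refine ⟨fun h => ?_, fun h => by rw [h, Nat.add_sub_cancel' hd.le]⟩
  rcases le_or_gt d c with hdc | hcd
  · rw [show c + (p - d) = c - d + p by omega, Nat.dvd_add_self_right] at h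
    have := Nat.eq_zero_of_dvd_of_lt h (by omega)
    omega
  · have := Nat.le_of_dvd (by omega) h
    omega

section LinearAlgebra

variable {k V : Type*} [Field k] [AddCommGroup V] [Module k V]

theorem finrank_eq_sum_finrank_of_projections [FiniteDimensional k V] {ι : Type*} [Fintype ι]
    [DecidableEq ι] (U : ι → Submodule k V) (e : ι → Module.End k V)
    (he_mem : ∀ i v, e i v ∈ U i) (he_sum : ∑ i, e i = 1)
    (he_apply : ∀ i j, ∀ v ∈ U j, e i v = if i = j then v else 0) :
    finrank k V = ∑ i, finrank k (U i) := by
  let φ : V ≃ₗ[k] ∀ i, U i := LinearEquiv.ofLinearMap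
    (LinearMap.pi fun i => (e i).codRestrict (U i) (he_mem i))
    (∑ i, (U i).subtype ∘ₗ LinearMap.proj i)
    (LinearMap.ext fun w => funext fun i => Subtype.ext <| by
      simp [he_apply i _ _ (w _).2])
    (by
      ext v
      simpa using congr($he_sum v))
  rw [φ.finrank_eq, Module.finrank_pi_fintype]

theorem Module.End.geom_sum_apply_mem_ker_sub_one {T : Module.End k V} {n : ℕ} (hT : T ^ n = 1)
    (v : V) : (∑ j ∈ range n, T ^ j) v ∈ LinearMap.ker (T - 1) := by
  rw [LinearMap.mem_ker, ← Module.End.mul_apply, mul_geom_sum, hT, sub_self,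
    LinearMap.zero_apply]

theorem Module.End.pow_apply_of_apply_eq_self {T : Module.End k V} {v : V} (hv : T v = v)
    (n : ℕ) : (T ^ n) v = v := by
  rw [Module.End.pow_apply]
  exact Function.iterate_fixed hv n

section PrimitiveRoot

variable {p : ℕ} {Z : Module.End k V}

theorem sum_range_pow_pow_eq_ite (hZp : Z ^ p = 1)
    (hZ : ∀ j, ¬ p ∣ j → LinearMap.ker (Z ^ j - 1) = ⊥) (c : ℕ) :
    ∑ j ∈ range p, (Z ^ c) ^ j = if p ∣ c then (p : Module.End k V) else 0 := by
  split_ifs with hc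
  · obtain ⟨q, rfl⟩ := hc
    simp [pow_mul, hZp]
  · refine LinearMap.ext fun v => ?_
    have hv := Module.End.geom_sum_apply_mem_ker_sub_one (T := Z ^ c) (n := p)
      (by rw [← pow_mul, mul_comm, pow_mul, hZp, one_pow]) v
    rw [hZ c hc, Submodule.mem_bot] at hv
    simpa using hv

theorem finrank_eq_sum_finrank_ker_pow_mul_sub_one [FiniteDimensional k V] (hp : (p : k) ≠ 0)
    {A : Module.End k V} (hA : A ^ p = 1) (hZp : Z ^ p = 1)
    (hZ : ∀ j, ¬ p ∣ j → LinearMap.ker (Z ^ j - 1) = ⊥) (hZA : Commute Z A) :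
    finrank k V = ∑ c : Fin p, finrank k (LinearMap.ker (Z ^ (c : ℕ) * A - 1)) := by
  have hp0 : 0 < p := Nat.pos_of_ne_zero fun h => hp (by rw [h, Nat.cast_zero])
  set N : ℕ → Module.End k V := fun c => ∑ j ∈ range p, (Z ^ c * A) ^ j with hN
  have hN_mem : ∀ c v, N c v ∈ LinearMap.ker (Z ^ c * A - 1) := fun c =>
    Module.End.geom_sum_apply_mem_ker_sub_one <| by
      rw [(hZA.pow_left c).mul_pow, ← pow_mul, mul_comm, pow_mul, hZp, hA, one_pow, one_mul]
  have hN_sum : ∑ c ∈ range p, N c = p := by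
    have hpow : ∀ c j, (Z ^ c * A) ^ j = (Z ^ j) ^ c * A ^ j := fun c j => by
      rw [(hZA.pow_left c).mul_pow, ← pow_mul, ← pow_mul, mul_comm]
    simp only [hN, hpow]
    rw [sum_comm]
    simp only [← sum_mul, sum_range_pow_pow_eq_ite hZp hZ]
    rw [sum_eq_single_of_mem 0 (mem_range.mpr hp0)]
    · simp
    · intro j hj hj0
      rw [if_neg fun h => hj0 (Nat.eq_zero_of_dvd_of_lt h (mem_range.mp hj)), zero_mul]
  -- on the fixed space of `Z ^ d * A`, the operator `A` acts as `Z ^ (p - d)`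
  have hN_apply : ∀ c d, c < p → d < p → ∀ v ∈ LinearMap.ker (Z ^ d * A - 1),
      N c v = if c = d then p • v else 0 := by
    intro c d hc hd v hv
    have hv' : (Z ^ d * A) v = v := sub_eq_zero.mp (LinearMap.mem_ker.mp hv)
    have hsplit : Z ^ c * A = Z ^ (c + (p - d)) * (Z ^ d * A) := by
      rw [← mul_assoc, ← pow_add, show c + (p - d) + d = c + p by omega, pow_add, hZp, mul_one]
    have hcomm : Commute (Z ^ (c + (p - d))) (Z ^ d * A) :=
      (Commute.pow_pow_self Z _ d).mul_right (hZA.pow_left _)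
    calc N c v = (∑ j ∈ range p, (Z ^ (c + (p - d))) ^ j) v := by
          simp only [hN, hsplit, hcomm.mul_pow, LinearMap.coe_sum, Finset.sum_apply,
            Module.End.mul_apply, Module.End.pow_apply_of_apply_eq_self hv']
      _ = if c = d then p • v else 0 := by
          simp only [sum_range_pow_pow_eq_ite hZp hZ, Nat.dvd_add_sub_iff_eq hc hd]
          split_ifs <;> simp
  refine finrank_eq_sum_finrank_of_projections _ (fun c => (p : k)⁻¹ • N c)
    (fun c v => Submodule.smul_mem _ _ (hN_mem c v)) ?_ fun c d v hv => ?_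
  · rw [← smul_sum, Fin.sum_univ_eq_sum_range N, hN_sum]
    ext v
    simp [← Nat.cast_smul_eq_nsmul k, smul_smul, hp]
  · simp only [LinearMap.smul_apply, hN_apply c d c.2 d.2 v hv, Fin.val_inj]
    split_ifs
    · rw [← Nat.cast_smul_eq_nsmul k, smul_smul, inv_mul_cancel₀ hp, one_smul]
    · rw [smul_zero]

theorem apply_mem_ker_pow_succ_mul_sub_one {A B : Module.End k V} (hZB : Commute Z B)
    (hBA : B * A = Z * A * B) {c : ℕ} {v : V} (hv : v ∈ LinearMap.ker (Z ^ c * A - 1)) :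
    B v ∈ LinearMap.ker (Z ^ (c + 1) * A - 1) := by
  have h : (Z ^ (c + 1) * A - 1) * B = B * (Z ^ c * A - 1) := by
    rw [sub_mul, mul_sub, one_mul, mul_one, pow_succ, mul_assoc, mul_assoc, ← mul_assoc Z, ← hBA,
      ← mul_assoc, (hZB.pow_left c).eq, mul_assoc]
  rw [LinearMap.mem_ker, ← Module.End.mul_apply, h, Module.End.mul_apply,
    LinearMap.mem_ker.mp hv, map_zero]

theorem mul_finrank_ker_sub_one_eq_finrank [FiniteDimensional k V] (hp : (p : k) ≠ 0)
    {A B : Module.End k V} (hA : A ^ p = 1) (hZp : Z ^ p = 1)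
    (hZ : ∀ j, ¬ p ∣ j → LinearMap.ker (Z ^ j - 1) = ⊥) (hZA : Commute Z A) (hZB : Commute Z B)
    (hBA : B * A = Z * A * B) (hB : Function.Injective B) :
    p * finrank k (LinearMap.ker (A - 1)) = finrank k V := by
  have hp0 : 0 < p := Nat.pos_of_ne_zero fun h => hp (by rw [h, Nat.cast_zero])
  set d : ℕ → ℕ := fun c => finrank k (LinearMap.ker (Z ^ c * A - 1)) with hd
  have hmono : Monotone d := monotone_nat_of_le_succ fun c =>
    LinearMap.finrank_le_finrank_of_injective
      (f := B.restrict fun _ => apply_mem_ker_pow_succ_mul_sub_one hZB hBA)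
      fun v w h => Subtype.ext (hB congr(($h : V)))
  have hper : Function.Periodic d p := fun c => by
    rw [hd]
    dsimp only
    rw [pow_add, hZp, mul_one]
  calc p * finrank k (LinearMap.ker (A - 1)) = ∑ _c : Fin p, d 0 := by
        rw [hd]
        dsimp only
        rw [pow_zero, one_mul, sum_const, card_univ, Fintype.card_fin, smul_eq_mul]
    _ = ∑ c : Fin p, d c :=
      sum_congr rfl fun c _ => (hmono.apply_eq_apply_zero_of_periodic hp0 hper c).symm
    _ = finrank k V := (finrank_eq_sum_finrank_ker_pow_mul_sub_one hp hA hZp hZ hZA).symm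

end PrimitiveRoot

end LinearAlgebra

theorem Representation.ker_eq_bot_or_eq_zero_of_forall_commute {k G V : Type*} [Field k] [Monoid G]
    [AddCommGroup V] [Module k V] (ρ : Representation k G V)
    (hirr : ∀ U : Submodule k V, (∀ g : G, ∀ v ∈ U, ρ g v ∈ U) → U = ⊥ ∨ U = ⊤)
    {T : Module.End k V} (hT : ∀ g, Commute T (ρ g)) : LinearMap.ker T = ⊥ ∨ T = 0 :=
  (hirr (LinearMap.ker T) fun g v hv => by
    rw [LinearMap.mem_ker, ← Module.End.mul_apply, (hT g).eq, Module.End.mul_apply,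
      LinearMap.mem_ker.mp hv, map_zero]).imp_right LinearMap.ker_eq_top.mp

theorem Representation.mul_finrank_ker_sub_one_eq_finrank_of_commutator {k G V : Type*} [Field k]
    [Group G] [AddCommGroup V] [Module k V] [FiniteDimensional k V] (ρ : Representation k G V)
    (hirr : ∀ U : Submodule k V, (∀ g : G, ∀ v ∈ U, ρ g v ∈ U) → U = ⊥ ∨ U = ⊤)
    {p : ℕ} [Fact p.Prime] (hp : (p : k) ≠ 0) {a b : G} (ha : ρ a ^ p = 1)
    (hz : ρ ⁅b, a⁆ ≠ 1) (hzp : ρ ⁅b, a⁆ ^ p = 1) (hcent : ∀ g, Commute (ρ ⁅b, a⁆) (ρ g)) :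
    p * finrank k (LinearMap.ker (ρ a - 1)) = finrank k V := by
  have hZ : ∀ j, ¬ p ∣ j → LinearMap.ker (ρ ⁅b, a⁆ ^ j - 1) = ⊥ := fun j hj =>
    (ρ.ker_eq_bot_or_eq_zero_of_forall_commute hirr fun g =>
      ((hcent g).pow_left j).sub_left (Commute.one_left _)).resolve_right <| by
        rwa [sub_eq_zero, ← orderOf_dvd_iff_pow_eq_one, orderOf_eq_prime hzp hz]
  have hBA : ρ b * ρ a = ρ ⁅b, a⁆ * ρ a * ρ b := by
    rw [← map_mul, ← map_mul, ← map_mul, commutatorElement_def]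
    group
  exact mul_finrank_ker_sub_one_eq_finrank hp ha hzp hZ (hcent a) (hcent b) hBA
    fun v w h => by simpa using congr(ρ b⁻¹ $h)

theorem statement_7_general {p : ℕ} [Fact p.Prime]
    {k : Type*} [Field k] (hchar : ringChar k ≠ p)
    {P : Type*} [Group P] [Fintype P] (hP : IsPGroup p P)
    {V : Type*} [AddCommGroup V] [Module k V] [FiniteDimensional k V]
    (ρ : Representation k P V)
    (hirr : ∀ U : Submodule k V, (∀ g : P, ∀ v ∈ U, ρ g v ∈ U) → U = ⊥ ∨ U = ⊤)
    (hcomm : ¬ ∀ z ∈ commutator P, ρ z = LinearMap.id)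
    {s : ℕ} (x : Fin s → P)
    (hgen : Subgroup.closure (Set.range x) = ⊤)
    (hord : ∀ j : Fin s, orderOf (x j) = p) :
    ∃ i : Fin s,
      p * Module.finrank k (LinearMap.ker (ρ (x i) - LinearMap.id)) =
        Module.finrank k V := by
  have hp : (p : k) ≠ 0 := fun h => hchar
    (((Fact.out : p.Prime).eq_one_or_self_of_dvd _ (ringChar.dvd h)).resolve_left
      CharP.ringChar_ne_one)
  have := hP.isNilpotent
  have hf : ¬ commutator P ≤ ρ.asGroupHom.ker := fun h => hcomm fun z hz => by
    rw [← Representation.asGroupHom_apply, ρ.asGroupHom.mem_ker.mp (h hz), Units.val_one]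
    rfl
  obtain ⟨_, ⟨i, rfl⟩, y, hne, hcent⟩ :=
    ρ.asGroupHom.exists_commutatorElement_ne_one_forall_commute hgen hf
  have hup := commutatorElement_pow_eq_one (n := p) (hcent (x i))
    (by rw [← map_pow, ← hord i, pow_orderOf_eq_one, map_one])
  rw [← map_commutatorElement] at hne hcent hup
  refine ⟨i, ρ.mul_finrank_ker_sub_one_eq_finrank_of_commutator hirr hp (b := y) ?_ ?_ ?_
    fun g => ?_⟩
  · rw [← map_pow, ← hord i, pow_orderOf_eq_one, map_one]
  · rwa [← Representation.asGroupHom_apply, Ne, Units.val_eq_one]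
  · rw [← map_pow, ← Representation.asGroupHom_apply, map_pow, hup, Units.val_one]
  · simpa only [Representation.asGroupHom_apply] using (hcent g).units_val

/-- **Fixed points of generators of order `p` in an irreducible representation.**
Let `P` be a finite `p`-group, `k` a field of characteristic different from `p`, and
`V` an irreducible `kP`-module on which `⁅P,P⁆` acts nontrivially. If `x₁, …, x_s`
generate `P` and each `x_j` has order `p`, then for some `i` we have
`dim C_V(x_i) = (1/p) · dim V`. -/
theorem statement_7 {p : ℕ} [Fact p.Prime]
    {k : Type*} [Field k] (hchar : ringChar k ≠ p)
    {P : Type*} [Group P] [Fintype P] (hP : IsPGroup p P)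
    {V : Type*} [AddCommGroup V] [Module k V] [FiniteDimensional k V]
    (ρ : Representation k P V)
    (hV : Nontrivial V)
    (hirr : ∀ U : Submodule k V, (∀ g : P, ∀ v ∈ U, ρ g v ∈ U) → U = ⊥ ∨ U = ⊤)
    (hcomm : ¬ ∀ z ∈ commutator P, ρ z = LinearMap.id)
    {s : ℕ} (x : Fin s → P)
    (hgen : Subgroup.closure (Set.range x) = ⊤)
    (hord : ∀ j : Fin s, orderOf (x j) = p) :
    ∃ i : Fin s,
      p * Module.finrank k (LinearMap.ker (ρ (x i) - LinearMap.id)) =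
        Module.finrank k V :=
  statement_7_general hchar hP ρ hirr hcomm x hgen hord
end

section
/- Let G be a finite group and let C₁, C₂ be conjugacy classes of involutions of G such that the product x₁x₂ has order a power of 2 for all x₁ ∈ C₁ and x₂ ∈ C₂. Let σ be an automorphism of G of order 2 with σ(C₁) = C₂, and let Ĝ be the semidirect product of G with the cyclic group of order 2 acting via σ. Then for every x ∈ C₁ ∪ C₂ (viewed as an element of Ĝ) and every g ∈ Ĝ, the subgroup of Ĝ generated by x and g⁻¹σ̂g is a 2-group, where σ̂ denotes the element of Ĝ corresponding to the generator of the cyclic factor of order 2. -/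
/-- Given an automorphism `σ` of `G` with `σ * σ = 1`, the corresponding action of the
cyclic group of order 2 (written as `Multiplicative (ZMod 2)`) on `G`, whose generator
acts as `σ`. -/
def involHom {G : Type*} [Group G] (σ : MulAut G) (hσ : σ * σ = 1) :
    Multiplicative (ZMod 2) →* MulAut G where
  toFun k := σ ^ (Multiplicative.toAdd k).val
  map_one' := by
    show σ ^ (Multiplicative.toAdd (1 : Multiplicative (ZMod 2))).val = 1
    simp
  map_mul' a b := by
    have h2 : σ ^ 2 = 1 := by rw [pow_two]; exact hσ
    have hd : orderOf σ ∣ 2 := orderOf_dvd_of_pow_eq_one h2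
    show σ ^ (Multiplicative.toAdd a + Multiplicative.toAdd b).val
        = σ ^ (Multiplicative.toAdd a).val * σ ^ (Multiplicative.toAdd b).val
    rw [← pow_add, pow_eq_pow_iff_modEq]
    refine Nat.ModEq.of_dvd hd ?_
    rw [ZMod.val_add]
    exact Nat.mod_modEq _ 2

open SemidirectProduct

/-- If `C₁`, `C₂` are conjugacy classes of involutions of a finite group `G` all of whose
mutual products have 2-power order, and `σ` is an automorphism of `G` of order 2
interchanging `C₁` and `C₂`, then in the semidirect product `Ĝ = G ⋊ ⟨σ⟩`, the pair
`(C₁ ∪ C₂, [σ])` is a Baer–Fischer pair: for every `x ∈ C₁ ∪ C₂` and every `g ∈ Ĝ`,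
the subgroup of `Ĝ` generated by `x` and `g⁻¹σ̂g` is a 2-group. -/
theorem statement_10 {G : Type*} [Group G] [Fintype G]
    (C₁ C₂ : Set G)
    (h₁ : ∃ a : G, orderOf a = 2 ∧ C₁ = {b : G | IsConj a b})
    (h₂ : ∃ a : G, orderOf a = 2 ∧ C₂ = {b : G | IsConj a b})
    (hprod : ∀ a ∈ C₁, ∀ b ∈ C₂, ∃ n : ℕ, orderOf (a * b) = 2 ^ n)
    (σ : MulAut G) (hσ2 : σ * σ = 1) (hσ1 : σ ≠ 1)
    (hσC : ⇑σ '' C₁ = C₂) :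
    ∀ x ∈ C₁ ∪ C₂, ∀ g : G ⋊[involHom σ hσ2] Multiplicative (ZMod 2),
      IsPGroup 2 ↥(Subgroup.closure
        {SemidirectProduct.inl x,
         g⁻¹ * SemidirectProduct.inr (Multiplicative.ofAdd (1 : ZMod 2)) * g}) := by
  intro x hx g
  set e : Multiplicative (ZMod 2) := Multiplicative.ofAdd 1 with he
  set s : G ⋊[involHom σ hσ2] Multiplicative (ZMod 2) := inr e with hs
  set t : G ⋊[involHom σ hσ2] Multiplicative (ZMod 2) := g⁻¹ * s * g with ht0
  clear_value t
  -- the automorphism is σ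
  have hee : e * e = 1 := by rw [he]; decide
  have hphi : involHom σ hσ2 e = σ := by
    rw [he]
    show σ ^ (Multiplicative.toAdd (Multiplicative.ofAdd (1 : ZMod 2))).val = σ
    rw [toAdd_ofAdd, show ZMod.val (1 : ZMod 2) = 1 from rfl, pow_one]
  have hphib : ∀ b : G, involHom σ hσ2 e b = σ b := fun b => by rw [hphi]
  have hs2 : s * s = 1 := by rw [hs, ← map_mul, hee, map_one]
  have hsmul : ∀ a b : G, (inl a * s) * (inl b * s) = inl (a * σ b) := by
    intro a b
    have h1 : s * inl b = inl (σ b) * s := by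
      rw [hs, ← hphib, inl_aut, mul_assoc, ← map_mul, inv_mul_cancel, map_one, mul_one]
    calc (inl a * s) * (inl b * s) = inl a * (s * inl b) * s := by group
    _ = inl a * (inl (σ b) * s) * s := by rw [h1]
    _ = (inl a * inl (σ b)) * (s * s) := by group
    _ = inl (a * σ b) := by rw [hs2, ← map_mul, mul_one]
  have ht2 : t * t = 1 := by
    have : t * t = g⁻¹ * (s * s) * g := by rw [ht0]; group
    rw [this, hs2]; group
  -- x is an involution
  have hxx : x * x = 1 := by
    have : ∃ a : G, orderOf a = 2 ∧ IsConj a x := by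
      rcases hx with hx | hx
      · obtain ⟨a, ha, hC⟩ := h₁; exact ⟨a, ha, by rwa [hC] at hx⟩
      · obtain ⟨a, ha, hC⟩ := h₂; exact ⟨a, ha, by rwa [hC] at hx⟩
    obtain ⟨a, ha, hc⟩ := this
    obtain ⟨c, rfl⟩ := isConj_iff.mp hc
    have haa : a * a = 1 := by rw [← pow_two, ← ha, pow_orderOf_eq_one]
    calc c * a * c⁻¹ * (c * a * c⁻¹) = c * (a * a) * c⁻¹ := by group
    _ = 1 := by rw [haa]; group
  -- t lies in the nontrivial coset
  have htr : t.right = e := by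
    have : t.right = (g.right)⁻¹ * e * g.right := by
      rw [ht0]; simp [hs]
    rw [this, mul_comm _ e]; group
  set w : G := t.left with hwdef
  have htw : t = inl w * s := by
    rw [hs, ← htr, hwdef, inl_left_mul_inr_right]
  clear_value w
  have hw : σ w = w⁻¹ := by
    have h1 : inl (w * σ w) = (1 : G ⋊[involHom σ hσ2] Multiplicative (ZMod 2)) := by
      rw [← hsmul, ← htw, ht2]
    rw [← map_one (inl : G →* G ⋊[involHom σ hσ2] Multiplicative (ZMod 2)), inl_inj] at h1
    exact (inv_eq_of_mul_eq_one_right h1).symm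
  -- the rotation r
  set r : G ⋊[involHom σ hσ2] Multiplicative (ZMod 2) := inl x * t with hr0
  clear_value r
  have hr2 : r * r = inl (x * (w * σ x * w⁻¹)) := by
    have h1 : r = inl (x * w) * s := by rw [hr0, htw, ← mul_assoc, ← map_mul]
    rw [h1, hsmul]
    have : (x * w) * σ (x * w) = x * (w * σ x * w⁻¹) := by
      rw [map_mul, hw]; group
    rw [this]
  -- the order of r is a power of 2
  have hσσ : ∀ c : G, σ (σ c) = c := by
    intro c
    have : (σ * σ) c = c := by rw [hσ2]; rfl
    simpa using this
  have hq : ∃ n : ℕ, (x * (w * σ x * w⁻¹)) ^ 2 ^ n = 1 := by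
    rcases hx with hx1 | hx2
    · have hσx : σ x ∈ C₂ := by rw [← hσC]; exact Set.mem_image_of_mem _ hx1
      have hc : w * σ x * w⁻¹ ∈ C₂ := by
        obtain ⟨a, -, hC⟩ := h₂
        rw [hC] at hσx ⊢
        exact hσx.trans (isConj_iff.mpr ⟨w, rfl⟩)
      obtain ⟨n, hn⟩ := hprod x hx1 _ hc
      exact ⟨n, by rw [← hn, pow_orderOf_eq_one]⟩
    · have hσx : σ x ∈ C₁ := by
        rw [← hσC] at hx2
        obtain ⟨c, hc, rfl⟩ := hx2
        rwa [hσσ]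
      have hc : w * σ x * w⁻¹ ∈ C₁ := by
        obtain ⟨a, -, hC⟩ := h₁
        rw [hC] at hσx ⊢
        exact hσx.trans (isConj_iff.mpr ⟨w, rfl⟩)
      obtain ⟨n, hn⟩ := hprod _ hc x hx2
      refine ⟨n, ?_⟩
      have h3 : x * (w * σ x * w⁻¹) = x * ((w * σ x * w⁻¹) * x) * x⁻¹ := by group
      rw [h3, conj_pow, ← hn, pow_orderOf_eq_one, mul_one, mul_inv_cancel]
  obtain ⟨n, hn⟩ := hq
  have hrpow : r ^ 2 ^ (n + 1) = 1 := by
    have : r ^ 2 ^ (n + 1) = (r * r) ^ 2 ^ n := by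
      rw [← pow_two, ← pow_mul, ← pow_succ']
    rw [this, hr2, ← map_pow, hn, map_one]
  -- basic relations
  have hxinv : (inl x : G ⋊[involHom σ hσ2] Multiplicative (ZMod 2))⁻¹ = inl x := by
    rw [← map_inv, inl_inj]
    exact inv_eq_of_mul_eq_one_right hxx
  have htinv : t⁻¹ = t := inv_eq_of_mul_eq_one_right ht2
  have hrt : r * t = inl x := by
    rw [hr0, mul_assoc, ht2, mul_one]
  have hconj : ∀ i : ℤ, t * r ^ i = r ^ (-i) * t := by
    intro i
    have h1 : t * r * t⁻¹ = r⁻¹ := by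
      have hri : r⁻¹ = t * inl x := by
        rw [hr0, mul_inv_rev, hxinv, htinv]
      rw [hri, hr0, htinv]
      calc t * (inl x * t) * t = t * inl x * (t * t) := by group
      _ = t * inl x := by rw [ht2, mul_one]
    have h2 : (t * r * t⁻¹) ^ i = t * r ^ i * t⁻¹ := conj_zpow
    rw [h1, inv_zpow, ← zpow_neg] at h2
    rw [h2]
    group
  -- the dihedral subgroup
  set H : Subgroup (G ⋊[involHom σ hσ2] Multiplicative (ZMod 2)) :=
    { carrier := {p | ∃ i : ℤ, p = r ^ i ∨ p = r ^ i * t}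
      one_mem' := ⟨0, Or.inl (zpow_zero r).symm⟩
      mul_mem' := by
        rintro p q ⟨i, rfl | rfl⟩ ⟨j, rfl | rfl⟩
        · exact ⟨i + j, Or.inl (zpow_add r i j).symm⟩
        · exact ⟨i + j, Or.inr (by rw [← mul_assoc, ← zpow_add])⟩
        · refine ⟨i - j, Or.inr ?_⟩
          rw [mul_assoc, hconj j, ← mul_assoc, ← zpow_add, sub_eq_add_neg]
        · refine ⟨i - j, Or.inl ?_⟩
          calc r ^ i * t * (r ^ j * t) = r ^ i * (t * r ^ j) * t := by group
          _ = r ^ i * (r ^ (-j) * t) * t := by rw [hconj]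
          _ = r ^ i * r ^ (-j) * (t * t) := by group
          _ = r ^ (i - j) := by rw [ht2, mul_one, ← zpow_add, sub_eq_add_neg]
      inv_mem' := by
        rintro p ⟨i, rfl | rfl⟩
        · exact ⟨-i, Or.inl (zpow_neg r i).symm⟩
        · refine ⟨i, Or.inr ?_⟩
          rw [mul_inv_rev, htinv, ← zpow_neg]
          rw [hconj (-i), neg_neg]
    } with hH
  have hsub : Subgroup.closure {inl x, t} ≤ H := by
    rw [Subgroup.closure_le]
    rintro p (rfl | rfl)
    · exact ⟨1, Or.inr (by rw [zpow_one, hrt])⟩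
    · exact ⟨0, Or.inr (by rw [zpow_zero, one_mul])⟩
  intro q
  have hq' : (q : G ⋊[involHom σ hσ2] Multiplicative (ZMod 2)) ∈ H := hsub q.2
  obtain ⟨i, hi | hi⟩ := hq'
  · refine ⟨n + 1, ?_⟩
    have : (q : G ⋊[involHom σ hσ2] Multiplicative (ZMod 2)) ^ 2 ^ (n + 1) = 1 := by
      rw [hi, ← zpow_natCast, ← zpow_mul, mul_comm, zpow_mul, zpow_natCast, hrpow, one_zpow]
    exact Subtype.ext (by rw [SubmonoidClass.coe_pow, this, OneMemClass.coe_one])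
  · refine ⟨1, ?_⟩
    have : (q : G ⋊[involHom σ hσ2] Multiplicative (ZMod 2)) ^ 2 ^ 1 = 1 := by
      rw [hi, show (2:ℕ)^1 = 2 from rfl, pow_two]
      calc r ^ i * t * (r ^ i * t) = r ^ i * (t * r ^ i) * t := by group
      _ = r ^ i * (r ^ (-i) * t) * t := by rw [hconj]
      _ = r ^ i * r ^ (-i) * (t * t) := by group
      _ = 1 := by rw [ht2, mul_one, ← zpow_add, add_neg_cancel, zpow_zero]
    exact Subtype.ext (by rw [SubmonoidClass.coe_pow, this, OneMemClass.coe_one])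
end

section
/- Let n ≥ 2 and let c, d be invertible 2n × 2n matrices over the field F₃ with three elements such that c² = −1 (the negative of the identity matrix) and d is a reflection, i.e. d² = 1 and the kernel of d − 1 has dimension 2n − 1. Then the subgroup of GL_{2n}(F₃) generated by c and d is a 2-group. -/
/-!
Write `d = 1 + E`. Since `d² = 1` and `3 = 0`, `E` is idempotent, and it has rank one because `d`
is a reflection, so `E c E = a E` for a scalar `a`. These relations together with `c² = -1` force
`(c d)⁸ = 1`. Then `d` conjugates `r = c d` to `d c = -r⁻¹`, so the 2-group `⟨r, -1⟩` is
normalised by the involution `d`, and `⟨c, d⟩ ≤ ⟨r, -1⟩ ⟨d⟩` is a 2-group.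
-/

open Module Subgroup

section Group

variable {G : Type*} [Group G]

theorem isPGroup_zpowers_of_pow_eq_one {p k : ℕ} {g : G} (h : g ^ p ^ k = 1) :
    IsPGroup p (zpowers g) :=
  IsPGroup.of_card_dvd_pow (by rw [Nat.card_zpowers]; exact orderOf_dvd_of_pow_eq_one h)

instance normal_zpowers_neg_one [HasDistribNeg G] : (zpowers (-1 : G)).Normal :=
  ⟨fun _ ⟨k, hk⟩ g => ⟨k, by
    rw [← hk]; simp only [((Commute.neg_one_right g).zpow_right k).eq, mul_inv_cancel_right]⟩⟩

theorem mem_normalizer_zpowers_mul_sup_zpowers_neg_one [HasDistribNeg G] {c d : G}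
    (hc : c ^ 2 = -1) (hd : d ^ 2 = 1) :
    d ∈ normalizer (zpowers (c * d) ⊔ zpowers (-1) : Subgroup G) := by
  set N := zpowers (c * d) ⊔ zpowers (-1)
  have hdd : d * d = 1 := by rw [← sq, hd]
  have hd_inv : d⁻¹ = d := inv_eq_of_mul_eq_one_right hdd
  have hc_inv : c⁻¹ = -c := inv_eq_of_mul_eq_one_right (by rw [mul_neg, ← sq, hc, neg_neg])
  have hconj : N.map (MulAut.conj d).toMonoidHom ≤ N := by
    rw [Subgroup.map_sup, MonoidHom.map_zpowers, MonoidHom.map_zpowers]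
    refine sup_le (zpowers_le.mpr ?_) (zpowers_le.mpr ?_)
    · have : d * (c * d) * d⁻¹ = -1 * (c * d)⁻¹ := by
        rw [← mul_assoc, mul_inv_cancel_right, mul_inv_rev, hd_inv, hc_inv, mul_neg,
          neg_one_mul, neg_neg]
      simpa only [MulEquiv.coe_toMonoidHom, MulAut.conj_apply, this] using
        mul_mem (mem_sup_right (mem_zpowers _)) (inv_mem (mem_sup_left (mem_zpowers _)))
    · simpa only [MulEquiv.coe_toMonoidHom, MulAut.conj_apply, mul_neg, neg_mul, mul_one,
        mul_inv_cancel] using mem_sup_right (mem_zpowers (-1 : G))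
  refine mem_normalizer_iff.mpr fun g => ⟨fun hg => hconj (mem_map_of_mem _ hg), fun hg => ?_⟩
  have : d * (d * g * d⁻¹) * d⁻¹ = g := by
    rw [hd_inv, ← mul_assoc, ← mul_assoc, hdd, one_mul, mul_assoc, hdd, mul_one]
  exact this ▸ hconj (mem_map_of_mem _ hg)

theorem isPGroup_two_closure_of_sq_eq_neg_one [HasDistribNeg G] {c d : G} {k : ℕ}
    (hc : c ^ 2 = -1) (hd : d ^ 2 = 1) (hcd : (c * d) ^ 2 ^ k = 1) :
    IsPGroup 2 (closure {c, d}) := by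
  have hN : IsPGroup 2 (zpowers (c * d) ⊔ zpowers (-1) : Subgroup G) :=
    (isPGroup_zpowers_of_pow_eq_one hcd).to_sup_of_normal_right
      (isPGroup_zpowers_of_pow_eq_one (k := 1) (by rw [pow_one, neg_one_sq]))
  refine (hN.to_sup_of_normal_left' (isPGroup_zpowers_of_pow_eq_one (k := 1) (by rwa [pow_one]))
    (zpowers_le.mpr (mem_normalizer_zpowers_mul_sup_zpowers_neg_one hc hd))).to_le ?_
  rw [closure_le, Set.insert_subset_iff, Set.singleton_subset_iff]
  refine ⟨?_, mem_sup_right (mem_zpowers d)⟩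
  have hc_mem := mul_mem (mem_sup_left (mem_sup_left (mem_zpowers (c * d)))) (mem_sup_right
    (mem_zpowers d) : d ∈ zpowers (c * d) ⊔ zpowers (-1) ⊔ zpowers d)
  rwa [mul_assoc, ← sq, hd, mul_one] at hc_mem

end Group

section CharThree

variable {R : Type*} [Ring R] [Algebra (ZMod 3) R]

theorem isIdempotentElem_sub_one_of_mul_self_eq_one {D : R} (hD : D * D = 1) :
    IsIdempotentElem (D - 1) := by
  have h3 : (3 : R) = 0 := by
    rw [← map_ofNat (algebraMap (ZMod 3) R) 3, show (3 : ZMod 3) = 0 from rfl, map_zero]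
  calc (D - 1) * (D - 1) = D * D - 1 - 3 * (D - 1) + (D - 1) := by noncomm_ring
    _ = D - 1 := by rw [hD, h3, sub_self, zero_mul, sub_zero, zero_add]

theorem mul_one_add_pow_eight_eq_one {C E : R} {a : ZMod 3} (hC : C * C = -1)
    (hE : IsIdempotentElem E) (hECE : E * C * E = a • E) : (C * (1 + E)) ^ 8 = 1 := by
  have hCC (M : R) : C * (C * M) = -M := by rw [← mul_assoc, hC, neg_one_mul]
  rw [mul_assoc] at hECE
  simp only [pow_succ, pow_zero, one_mul, mul_add, add_mul, mul_one, mul_assoc, hCC, hC, hE.eq,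
    hECE, mul_neg, neg_mul, neg_neg, smul_neg, mul_smul_comm, smul_mul_assoc, smul_smul]
  -- each coefficient is a polynomial in `a` vanishing on `ZMod 3`
  match_scalars <;> clear hECE <;> revert a <;> decide

end CharThree

theorem LinearMap.exists_comp_comp_eq_smul_of_finrank_range_eq_one {K V : Type*} [Field K]
    [AddCommGroup V] [Module K V] {f : V →ₗ[K] V} (hf : finrank K (range f) = 1)
    (g : V →ₗ[K] V) : ∃ a : K, f ∘ₗ g ∘ₗ f = a • f := by
  obtain ⟨a, ha, -⟩ := ((f ∘ₗ g).restrict (p := range f) (q := range f)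
    fun x _ => mem_range_self f (g x)).existsUnique_eq_smul_id_of_finrank_eq_one hf
  exact ⟨a, ext fun x => by
    simpa using congr_arg Subtype.val (LinearMap.congr_fun ha ⟨f x, mem_range_self f x⟩)⟩

theorem Matrix.mul_one_add_pow_eight_eq_one_of_finrank_range_eq_one {ι : Type*} [Fintype ι]
    [DecidableEq ι] {C E : Matrix ι ι (ZMod 3)} (hC : C * C = -1) (hE : IsIdempotentElem E)
    (hrank : finrank (ZMod 3) (LinearMap.range (toLin' E)) = 1) : (C * (1 + E)) ^ 8 = 1 := by
  obtain ⟨a, ha⟩ := (toLin' E).exists_comp_comp_eq_smul_of_finrank_range_eq_one hrank (toLin' C)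
  have hECE : E * C * E = a • E :=
    toLin'.injective (by simpa [toLin'_mul, LinearMap.comp_assoc] using ha)
  exact mul_one_add_pow_eight_eq_one hC hE hECE

/-- **Example in `SL_{2n}(3).2`.**
Let `c, d` be invertible `2n × 2n` matrices over `F₃` (`n ≥ 2`) with `c² = -1` and `d`
a reflection (i.e. `d² = 1` and `ker (d - 1)` has dimension `2n - 1`). Then the
subgroup of `GL_{2n}(F₃)` generated by `c` and `d` is a 2-group. -/
theorem statement_12 (n : ℕ) (hn : 2 ≤ n)
    (c d : GL (Fin (2 * n)) (ZMod 3))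
    (hc : c ^ 2 = -1)
    (hd2 : d ^ 2 = 1)
    (hdfix : Module.finrank (ZMod 3)
        (LinearMap.ker (Matrix.toLin'
          ((d : Matrix (Fin (2 * n)) (Fin (2 * n)) (ZMod 3)) - 1))) = 2 * n - 1) :
    IsPGroup 2 ↥(Subgroup.closure {c, d}) := by
  set E := (d : Matrix (Fin (2 * n)) (Fin (2 * n)) (ZMod 3)) - 1 with hE_def
  have hrank : finrank (ZMod 3) (LinearMap.range (Matrix.toLin' E)) = 1 := by
    have := LinearMap.finrank_range_add_finrank_ker (Matrix.toLin' E)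
    rw [hdfix, finrank_fintype_fun_eq_card, Fintype.card_fin] at this
    omega
  have hC : (c : Matrix (Fin (2 * n)) (Fin (2 * n)) (ZMod 3)) * c = -1 := by
    simpa [sq] using congr_arg Units.val hc
  have hE : IsIdempotentElem E :=
    isIdempotentElem_sub_one_of_mul_self_eq_one (by simpa [sq] using congr_arg Units.val hd2)
  have hcd : (c * d) ^ 2 ^ 3 = 1 :=
    Units.ext (by
      simpa [hE_def] using Matrix.mul_one_add_pow_eight_eq_one_of_finrank_range_eq_one hC hE hrank)
  exact isPGroup_two_closure_of_sq_eq_neg_one hc hd2 hcd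
end

section
/- Let G be a finite nonabelian simple group and let x ∈ G be an element contained in exactly one maximal subgroup of G. Then for every h ∈ G with h ≠ 1 there exists a conjugate g of h in G such that the commutator ⁅x, g⁻¹x⁻¹g⁆ is nontrivial. -/
open scoped commutatorElement

/-!
If `x` commutes with `g⁻¹ x g` for every conjugate `g` of `h`, then `g⁻¹ x g` lies in the
centralizer of `x`, hence (unless `x` is central) in the unique maximal subgroup `M` containing
`x`. Thus `M` and its conjugate by `g` are maximal subgroups containing `x`, so they coincide
and `g` normalizes `M`. By simplicity the conjugates of `h` generate `G`, so `M` would be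
normal, which a maximal subgroup of a nonabelian simple group cannot be.
-/

namespace Subgroup

variable {G : Type*} [Group G] {M : Subgroup G} {x : G}

theorem conj_mem_of_commute_conj [Finite G] (hxM : x ∈ M)
    (huniq : ∀ N : Subgroup G, IsCoatom N → x ∈ N → N = M) {g : G}
    (hcomm : Commute x (g⁻¹ * x * g)) : g⁻¹ * x * g ∈ M := by
  rcases IsCoatomic.eq_top_or_exists_le_coatom (centralizer {x}) with htop | ⟨N, hN, hle⟩
  · have hgx : g * x = x * g := mem_centralizer_singleton_iff.mp (htop ▸ mem_top g)
    simpa [mul_assoc, ← hgx] using hxM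
  · have hxN : x ∈ N := hle (mem_centralizer_singleton_iff.mpr rfl)
    exact huniq N hN hxN ▸ hle (mem_centralizer_singleton_iff.mpr hcomm.eq.symm)

theorem mem_normalizer_of_conj_mem (hM : IsCoatom M)
    (huniq : ∀ N : Subgroup G, IsCoatom N → x ∈ N → N = M) {g : G}
    (hg : g⁻¹ * x * g ∈ M) : g ∈ normalizer (M : Set G) := by
  rw [mem_normalizer_iff_map_conj_eq]
  refine huniq _ ((OrderIso.isCoatom_iff (MulAut.conj g).mapSubgroup M).mpr hM) ?_
  exact ⟨g⁻¹ * x * g, hg, by simp [mul_assoc]⟩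

theorem eq_top_of_forall_isConj_mem [IsSimpleGroup G] (K : Subgroup G) {h : G} (hh : h ≠ 1)
    (hK : ∀ g, IsConj h g → g ∈ K) : K = ⊤ := by
  have hclosure : normalClosure {h} = ⊤ :=
    normalClosure_normal.eq_bot_or_eq_top.resolve_left fun hbot =>
      hh ((mem_bot).mp (hbot ▸ subset_normalClosure rfl))
  rw [eq_top_iff, ← hclosure, normalClosure, closure_le]
  intro g hg
  obtain ⟨a, rfl, hconj⟩ := Group.mem_conjugatesOfSet_iff.mp hg
  exact hK g hconj

theorem not_isCoatom_bot (hnonabelian : ∃ a b : G, a * b ≠ b * a) : ¬IsCoatom (⊥ : Subgroup G) := by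
  intro hbot
  obtain ⟨a, b, hab⟩ := hnonabelian
  have ha : a ≠ 1 := by rintro rfl; simp at hab
  have hzp : zpowers a = ⊤ := hbot.2 _ (bot_lt_iff_ne_bot.mpr (zpowers_ne_bot.mpr ha))
  obtain ⟨n, rfl⟩ := mem_zpowers_iff.mp (hzp ▸ mem_top b)
  exact hab ((Commute.refl a).zpow_right n).eq

end Subgroup

theorem IsSimpleGroup.not_normal_of_isCoatom {G : Type*} [Group G] [IsSimpleGroup G]
    (hnonabelian : ∃ a b : G, a * b ≠ b * a) {M : Subgroup G} (hM : IsCoatom M) : ¬M.Normal :=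
  fun hnormal => hnormal.eq_bot_or_eq_top.elim
    (fun hbot => Subgroup.not_isCoatom_bot hnonabelian (hbot ▸ hM)) hM.1

/-- In a finite nonabelian simple group `G`, if `x` lies in exactly one maximal subgroup
of `G`, then for every nontrivial `h ∈ G` there is a conjugate `g` of `h` such that
`⁅x, g⁻¹x⁻¹g⁆ ≠ 1`. -/
theorem statement_17 {G : Type*} [Group G] [Fintype G]
    (hsimple : IsSimpleGroup G) (hnonabelian : ∃ a b : G, a * b ≠ b * a)
    (x : G) (hx : ∃! M : Subgroup G, IsCoatom M ∧ x ∈ M) :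
    ∀ h : G, h ≠ 1 → ∃ g : G, IsConj h g ∧ ⁅x, g⁻¹ * x⁻¹ * g⁆ ≠ 1 := by
  obtain ⟨M, ⟨hM, hxM⟩, huniq⟩ := hx
  have huniq' : ∀ N : Subgroup G, IsCoatom N → x ∈ N → N = M := fun N hN hxN => huniq N ⟨hN, hxN⟩
  intro h hh
  by_contra! hcomm
  have hnormalizer : Subgroup.normalizer (M : Set G) = ⊤ :=
    Subgroup.eq_top_of_forall_isConj_mem _ hh fun g hg => by
      have hcomm' : Commute x (g⁻¹ * x * g) := by
        simpa [mul_assoc] using (commutatorElement_eq_one_iff_commute.mp (hcomm g hg)).inv_right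
      exact Subgroup.mem_normalizer_of_conj_mem hM huniq'
        (Subgroup.conj_mem_of_commute_conj hxM huniq' hcomm')
  exact IsSimpleGroup.not_normal_of_isCoatom hnonabelian hM
    (Subgroup.normalizer_eq_top_iff.mp hnormalizer)
end
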